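/- Let n = 2. Then the graph G(V) has exactly q(q−1) vertices, every vertex of G(V) has exactly one neighbour, and G(V) has exactly q(q−1)/2 connected components. -/

import Mathlib

/-!
A line `K ∙ v` is a vertex iff `Ψ(v,v) ≠ 0`. In `K²` the vectors orthogonal to a non-isotropic
`v` form the line through `v⊥ = (τ v₁, -τ v₀)`, and `Ψ(v⊥,v⊥) = Ψ(v,v)`; so every vertex has
exactly one neighbour, the graph is a perfect matching, and it has half as many components as
vertices.

The lines of `K²` are `K ∙ (0,1)` and `K ∙ (1,b)` for `b ∈ K`, and `K ∙ (1,b)` is isotropic iff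
`b ^ (q+1) = -1`. The map `x ↦ x ^ (q+1)` sends `Kˣ`, of order `(q+1)(q-1)`, into the
`(q-1)`-th roots of unity with kernel the `(q+1)`-th roots of unity; since each has at most
`q ∓ 1` elements, it is onto with fibres of size `q+1`. As `(-1) ^ q = τ(-1) = -1`, exactly
`q+1` slopes are isotropic, leaving `1 + q² - (q+1) = q(q-1)` vertices.
-/

namespace FramePaper

variable {K : Type*} [Field K]

/-- The standard Hermitian form `Ψ(v,w) = ∑ i, v i * τ (w i)` on `Fin n → K`. -/
def Psi (τ : K → K) {n : ℕ} (v w : Fin n → K) : K :=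
  ∑ i, v i * τ (w i)

lemma Psi_add_left (τ : K → K) {n : ℕ} (a b w : Fin n → K) :
    Psi τ (a + b) w = Psi τ a w + Psi τ b w := by
  simp [Psi, add_mul, Finset.sum_add_distrib]

lemma Psi_smul_left (τ : K → K) {n : ℕ} (c : K) (a w : Fin n → K) :
    Psi τ (c • a) w = c * Psi τ a w := by
  simp [Psi, Finset.mul_sum, mul_assoc]

/-- The orthogonal complement `S^⊥ = {v | ∀ s ∈ S, Ψ(v,s) = 0}`. -/
def perp (τ : K → K) {n : ℕ} (S : Submodule K (Fin n → K)) :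
    Submodule K (Fin n → K) where
  carrier := {v | ∀ s ∈ S, Psi τ v s = 0}
  add_mem' := by
    intro a b ha hb
    show ∀ s ∈ S, Psi τ (a + b) s = 0
    intro s hs
    rw [Psi_add_left, ha s hs, hb s hs, add_zero]
  zero_mem' := by
    show ∀ s ∈ S, Psi τ 0 s = 0
    intro s hs
    simp [Psi]
  smul_mem' := by
    intro c a ha
    show ∀ s ∈ S, Psi τ (c • a) s = 0
    intro s hs
    rw [Psi_smul_left, ha s hs, mul_zero]

/-- A subspace `S` is non-degenerate iff `S ⊓ S^⊥ = ⊥`. -/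
def Nondeg (τ : K → K) {n : ℕ} (S : Submodule K (Fin n → K)) : Prop :=
  S ⊓ perp τ S = ⊥

/-- Vertices of `G(V)`: the `1`-dimensional non-degenerate subspaces. -/
def IsVertex (τ : K → K) {n : ℕ} (S : Submodule K (Fin n → K)) : Prop :=
  Module.finrank K S = 1 ∧ Nondeg τ S

/-- The graph `G(V)` on the `1`-dimensional non-degenerate subspaces of `V = Fin n → K`,
with `S, W` adjacent iff `S ≠ W` and `Ψ(s,w) = 0` for all `s ∈ S`, `w ∈ W`. -/
def FrameGraph (τ : K →+* K) (hτ2 : ∀ x, τ (τ x) = x) (n : ℕ) :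
    SimpleGraph {S : Submodule K (Fin n → K) // IsVertex (⇑τ) S} where
  Adj S W := S ≠ W ∧ ∀ s ∈ S.1, ∀ w ∈ W.1, Psi (⇑τ) s w = 0
  symm := ⟨by
    rintro S W ⟨hne, h⟩
    refine ⟨hne.symm, fun w hw s hs => ?_⟩
    have key : Psi (⇑τ) w s = τ (Psi (⇑τ) s w) := by
      simp only [Psi, map_sum, map_mul, hτ2]
      exact Finset.sum_congr rfl fun i _ => mul_comm _ _
    rw [key, h s hs w hw, map_zero]⟩
  loopless := ⟨fun S h => h.1 rfl⟩

/-- On a finite field with `q ^ 2` elements, `x ↦ x ^ q` is an involution. -/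
lemma tau_invol [Fintype K] {q : ℕ} (hK : Fintype.card K = q ^ 2)
    (τ : K →+* K) (hτq : ∀ x, τ x = x ^ q) : ∀ x, τ (τ x) = x := fun x => by
  rw [hτq, hτq, ← pow_mul, ← pow_two, ← hK, FiniteField.pow_card]

noncomputable instance instFintypeVertex [Fintype K] {n : ℕ} (τ : K → K) :
    Fintype {S : Submodule K (Fin n → K) // IsVertex τ S} := by
  have : Finite (Submodule K (Fin n → K)) :=
    Finite.of_injective (fun S => (S : Set (Fin n → K))) SetLike.coe_injective
  exact Fintype.ofFinite _

/-- The integer `d_m = q^{m-2} (q^{m-1} - (-1)^{m-1}) / (q+1)` (the division is exact). -/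
def dZ (q m : ℕ) : ℤ :=
  ((q : ℤ) ^ (m - 2) * ((q : ℤ) ^ (m - 1) - (-1) ^ (m - 1))) / ((q : ℤ) + 1)

end FramePaper

namespace SimpleGraph

variable {V : Type*} {G : SimpleGraph V}

lemma eq_or_adj_of_reachable_of_existsUnique_adj (h : ∀ v, ∃! w, G.Adj v w) {u v : V}
    (huv : G.Reachable u v) : u = v ∨ G.Adj u v := by
  obtain ⟨p⟩ := huv
  induction p with
  | nil => exact .inl rfl
  | cons hadj _ ih =>
    rcases ih with rfl | hadj'
    · exact .inr hadj
    · exact .inl ((h _).unique hadj.symm hadj')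

lemma card_connectedComponentMk_fiber_of_existsUnique_adj (h : ∀ v, ∃! w, G.Adj v w)
    (c : G.ConnectedComponent) : Nat.card {v // G.connectedComponentMk v = c} = 2 := by
  induction c using ConnectedComponent.ind with
  | h u =>
    obtain ⟨w, hw, -⟩ := h u
    rw [Nat.card_eq_two_iff' ⟨u, rfl⟩]
    refine ⟨⟨w, ConnectedComponent.eq.2 hw.symm.reachable⟩,
      fun hwu => hw.ne (congrArg Subtype.val hwu).symm, ?_⟩
    rintro ⟨x, hx⟩ hxu
    rcases eq_or_adj_of_reachable_of_existsUnique_adj h (ConnectedComponent.eq.1 hx)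
      with rfl | hxu'
    · exact absurd rfl hxu
    · exact Subtype.ext ((h u).unique hxu'.symm hw)

theorem card_eq_two_mul_card_connectedComponent_of_existsUnique_adj [Finite V]
    (h : ∀ v, ∃! w, G.Adj v w) : Nat.card V = 2 * Nat.card G.ConnectedComponent := by
  have := Fintype.ofFinite G.ConnectedComponent
  rw [← Nat.card_congr (Equiv.sigmaFiberEquiv G.connectedComponentMk), Nat.card_sigma]
  simp [card_connectedComponentMk_fiber_of_existsUnique_adj h, mul_comm]

end SimpleGraph

theorem MonoidHom.card_ker_eq_and_range_eq_of_card_eq_mul {G H : Type*} [Group G] [Group H]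
    [Finite G] (f : G →* H) {L : Subgroup H} [Finite L] (hfL : f.range ≤ L) {a b : ℕ}
    (hker : Nat.card f.ker ≤ a) (hL : Nat.card L ≤ b) (hG : Nat.card G = a * b) :
    Nat.card f.ker = a ∧ f.range = L := by
  have hmul : Nat.card f.ker * Nat.card f.range = a * b := by
    rw [← Subgroup.index_ker, Subgroup.card_mul_index, hG]
  have hrange : Nat.card f.range ≤ b := (Subgroup.card_le_of_le hfL).trans hL
  have : Finite f.range := .of_surjective _ f.rangeRestrict_surjective
  have hk : 0 < Nat.card f.ker := Nat.card_pos
  have hr : 0 < Nat.card f.range := Nat.card_pos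
  have hka : Nat.card f.ker = a := by nlinarith
  have hrb : Nat.card f.range = b := by
    rw [hka] at hmul
    exact Nat.eq_of_mul_eq_mul_left (hka ▸ hk) hmul
  exact ⟨hka, Subgroup.eq_of_le_of_card_ge hfL (hrb ▸ hL)⟩

namespace FramePaper

variable {K : Type*} [Field K]

section Hermitian

variable (τ : K →+* K) {n : ℕ}

lemma Psi_smul_right (c : K) (v w : Fin n → K) : Psi τ v (c • w) = τ c * Psi τ v w := by
  simp only [Psi, Pi.smul_apply, smul_eq_mul, map_mul, Finset.mul_sum]
  exact Finset.sum_congr rfl fun i _ => by ring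

lemma mem_perp_span_singleton {x v : Fin n → K} : x ∈ perp τ (K ∙ v) ↔ Psi τ x v = 0 := by
  refine ⟨fun h => h v (Submodule.mem_span_singleton_self v), fun h s hs => ?_⟩
  obtain ⟨c, rfl⟩ := Submodule.mem_span_singleton.mp hs
  rw [Psi_smul_right, h, mul_zero]

lemma span_singleton_le_perp_iff {v w : Fin n → K} :
    K ∙ v ≤ perp τ (K ∙ w) ↔ Psi τ v w = 0 := by
  rw [Submodule.span_singleton_le_iff_mem, mem_perp_span_singleton]

lemma nondeg_span_singleton_iff {v : Fin n → K} (hv : v ≠ 0) :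
    Nondeg τ (K ∙ v) ↔ Psi τ v v ≠ 0 := by
  rw [Nondeg, Submodule.eq_bot_iff]
  constructor
  · intro h hvv
    exact hv (h v ⟨Submodule.mem_span_singleton_self v, (mem_perp_span_singleton τ).2 hvv⟩)
  · intro hvv x hx
    obtain ⟨hx, hxv⟩ := Submodule.mem_inf.mp hx
    obtain ⟨c, rfl⟩ := Submodule.mem_span_singleton.mp hx
    rw [mem_perp_span_singleton, Psi_smul_left] at hxv
    rw [(mul_eq_zero.mp hxv).resolve_right hvv, zero_smul]

lemma isVertex_span_singleton_iff {v : Fin n → K} (hv : v ≠ 0) :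
    IsVertex τ (K ∙ v) ↔ Psi τ v v ≠ 0 := by
  rw [IsVertex, finrank_span_singleton hv, nondeg_span_singleton_iff τ hv, and_iff_right rfl]

lemma ne_zero_of_Psi_ne_zero {v w : Fin n → K} (h : Psi τ v w ≠ 0) : v ≠ 0 := by
  rintro rfl
  simp [Psi] at h

lemma isVertex_iff {S : Submodule K (Fin n → K)} :
    IsVertex τ S ↔ ∃ v, Psi τ v v ≠ 0 ∧ S = K ∙ v := by
  constructor
  · intro hS
    have hbot : S ≠ ⊥ := by rintro rfl; simpa using hS.1
    obtain ⟨v, hvS, hv⟩ := Submodule.exists_mem_ne_zero_of_ne_bot hbot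
    have hSv := eq_span_singleton_of_mem_of_finrank_eq_one hS.1 hvS hv
    rw [hSv] at hS
    exact ⟨v, (isVertex_span_singleton_iff τ hv).1 hS, hSv⟩
  · rintro ⟨v, hvv, rfl⟩
    exact (isVertex_span_singleton_iff τ (ne_zero_of_Psi_ne_zero τ hvv)).2 hvv

lemma IsVertex.not_le_perp {S : Submodule K (Fin n → K)} (hS : IsVertex τ S) :
    ¬ S ≤ perp τ S := by
  intro hle
  have hbot : S = ⊥ := by rw [← inf_eq_left.2 hle]; exact hS.2
  subst hbot
  simpa using hS.1

lemma frameGraph_adj_iff (hτ : ∀ x, τ (τ x) = x)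
    {S W : {S : Submodule K (Fin n → K) // IsVertex τ S}} :
    (FrameGraph τ hτ n).Adj S W ↔ S.1 ≤ perp τ W.1 :=
  ⟨And.right, fun h => ⟨by rintro rfl; exact S.2.not_le_perp τ h, h⟩⟩

end Hermitian

section Plane

lemma Psi_two (τ : K → K) (v w : Fin 2 → K) : Psi τ v w = v 0 * τ (w 0) + v 1 * τ (w 1) := by
  simp [Psi, Fin.sum_univ_two]

def vperp (τ : K → K) (v : Fin 2 → K) : Fin 2 → K := ![τ (v 1), -τ (v 0)]

variable (τ : K →+* K)

lemma Psi_vperp_right (hτ : ∀ x, τ (τ x) = x) (v : Fin 2 → K) : Psi τ v (vperp τ v) = 0 := by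
  simp only [Psi_two, vperp, Matrix.cons_val_zero, Matrix.cons_val_one, Matrix.cons_val_fin_one,
    map_neg, hτ]
  ring

lemma Psi_vperp_vperp (hτ : ∀ x, τ (τ x) = x) (v : Fin 2 → K) :
    Psi τ (vperp τ v) (vperp τ v) = Psi τ v v := by
  simp only [Psi_two, vperp, Matrix.cons_val_zero, Matrix.cons_val_one, Matrix.cons_val_fin_one,
    map_neg, hτ]
  ring

lemma mem_span_vperp (hτ : ∀ x, τ (τ x) = x) {u v : Fin 2 → K} (hv : Psi τ v v ≠ 0)
    (hvu : Psi τ v u = 0) :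
    u ∈ K ∙ vperp τ v := by
  rw [Submodule.mem_span_singleton]
  -- the coefficient of `u` in the orthogonal basis `v, v⊥`, as `Ψ(v⊥,v⊥) = Ψ(v,v)`
  refine ⟨Psi τ u (vperp τ v) / Psi τ v v, ?_⟩
  have hvu' : τ (v 0) * u 0 + τ (v 1) * u 1 = 0 := by
    simpa [Psi_two, hτ, mul_comm] using congrArg τ hvu
  rw [Psi_two] at hv
  ext i
  fin_cases i <;>
    simp only [Psi_two, vperp, Matrix.cons_val_zero, Matrix.cons_val_one, Matrix.cons_val_fin_one,
      map_neg, hτ, Pi.smul_apply, smul_eq_mul, Fin.zero_eta, Fin.mk_one] <;> field_simp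
  · linear_combination (-v 0) * hvu'
  · linear_combination (-v 1) * hvu'

theorem existsUnique_frameGraph_adj (hτ : ∀ x, τ (τ x) = x)
    (S : {S : Submodule K (Fin 2 → K) // IsVertex τ S}) :
    ∃! W, (FrameGraph τ hτ 2).Adj S W := by
  obtain ⟨v, hv, hSv⟩ := (isVertex_iff τ).1 S.2
  have hW : IsVertex τ (K ∙ vperp τ v) :=
    (isVertex_iff τ).2 ⟨_, (Psi_vperp_vperp τ hτ v).symm ▸ hv, rfl⟩
  refine ⟨⟨_, hW⟩, (frameGraph_adj_iff τ hτ).2 ?_, fun W' hW' => ?_⟩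
  · rw [hSv, span_singleton_le_perp_iff]
    exact Psi_vperp_right τ hτ v
  · obtain ⟨u, -, hW'u⟩ := (isVertex_iff τ).1 W'.2
    replace hW' := (frameGraph_adj_iff τ hτ).1 hW'
    rw [hSv, hW'u, span_singleton_le_perp_iff] at hW'
    have hle : W'.1 ≤ K ∙ vperp τ v := by
      rw [hW'u, Submodule.span_singleton_le_iff_mem]
      exact mem_span_vperp τ hτ hv hW'
    exact Subtype.ext (Submodule.eq_of_le_of_finrank_eq hle (by rw [W'.2.1, hW.1]))

lemma span_singleton_one_ne (b : K) : K ∙ ![1, b] ≠ K ∙ ![0, 1] := by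
  intro h
  obtain ⟨c, hc⟩ := Submodule.span_singleton_eq_span_singleton.mp h
  simpa [Units.smul_def] using congrFun hc 0

lemma span_singleton_one_injective : Function.Injective fun b : K => K ∙ ![1, b] := by
  intro b b' h
  obtain ⟨c, hc⟩ := Submodule.span_singleton_eq_span_singleton.mp h
  have hc1 : (c : K) = 1 := by simpa [Units.smul_def] using congrFun hc 0
  simpa [Units.smul_def, hc1] using congrFun hc 1

lemma span_singleton_eq_or_exists {v : Fin 2 → K} (hv : v ≠ 0) :
    K ∙ v = K ∙ ![0, 1] ∨ ∃ b, K ∙ v = K ∙ ![1, b] := by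
  by_cases h0 : v 0 = 0
  · have h1 : v 1 ≠ 0 := fun h1 => hv (by ext i; fin_cases i <;> simp [h0, h1])
    have hv' : v = v 1 • ![0, 1] := by ext i; fin_cases i <;> simp [h0]
    left
    rw [hv', Submodule.span_singleton_smul_eq (IsUnit.mk0 _ h1)]
  · right
    have hv' : v = v 0 • ![1, v 1 / v 0] := by
      ext i; fin_cases i <;> simp [mul_div_cancel₀ _ h0]
    refine ⟨v 1 / v 0, ?_⟩
    conv_lhs => rw [hv', Submodule.span_singleton_smul_eq (IsUnit.mk0 _ h0)]

lemma isVertex_span_singleton_zero_one (τ : K →+* K) : IsVertex τ (K ∙ ![0, 1]) :=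
  (isVertex_span_singleton_iff τ (fun h => by simpa using congrFun h 1)).2 (by simp [Psi_two])

lemma isVertex_span_singleton_one_iff (τ : K →+* K) {q : ℕ} (hτq : ∀ x, τ x = x ^ q) (b : K) :
    IsVertex τ (K ∙ ![1, b]) ↔ b ^ (q + 1) ≠ -1 := by
  rw [isVertex_span_singleton_iff τ (fun h => by simpa using congrFun h 0), Psi_two]
  simp [hτq, ← pow_succ', add_eq_zero_iff_eq_neg']

end Plane

section FiniteField

variable [Fintype K] {q : ℕ}

lemma two_le_of_card_eq_sq (hK : Fintype.card K = q ^ 2) : 2 ≤ q := by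
  have := Fintype.one_lt_card (α := K)
  rw [hK] at this
  nlinarith

theorem card_ker_powMonoidHom_and_range_eq (hK : Fintype.card K = q ^ 2) :
    Nat.card (powMonoidHom (q + 1) : Kˣ →* Kˣ).ker = q + 1 ∧
      (powMonoidHom (q + 1) : Kˣ →* Kˣ).range = rootsOfUnity (q - 1) K := by
  classical
  have hq := two_le_of_card_eq_sq hK
  have hunits : Nat.card Kˣ = (q + 1) * (q - 1) := by
    rw [Nat.card_eq_fintype_card, Fintype.card_units, hK]
    zify [show 1 ≤ q by omega, show 1 ≤ q ^ 2 by nlinarith]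
    ring
  have : NeZero (q - 1) := ⟨by omega⟩
  refine MonoidHom.card_ker_eq_and_range_eq_of_card_eq_mul _ ?_
    (card_rootsOfUnity (k := q + 1) (R := K)) (card_rootsOfUnity (k := q - 1) (R := K)) hunits
  rintro _ ⟨x, rfl⟩
  rw [mem_rootsOfUnity, powMonoidHom_apply, ← pow_mul, ← hunits, pow_card_eq_one']

theorem card_pow_succ_eq_neg_one (hK : Fintype.card K = q ^ 2) (hneg : (-1 : K) ^ q = -1) :
    Nat.card {b : K // b ^ (q + 1) = -1} = q + 1 := by
  classical
  obtain ⟨hker, hrange⟩ := card_ker_powMonoidHom_and_range_eq hK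
  set N : Kˣ →* Kˣ := powMonoidHom (q + 1)
  have hneg' : (-1 : K) ^ (q - 1) = 1 := by
    rw [← Nat.sub_add_cancel (one_le_two.trans (two_le_of_card_eq_sq hK)), pow_succ] at hneg
    exact (mul_eq_right₀ (neg_ne_zero.2 one_ne_zero)).1 hneg
  have hmem : (-1 : Kˣ) ∈ N.range := by
    rw [hrange, mem_rootsOfUnity]
    ext
    simp [hneg']
  have hfiber := MonoidHom.card_fiber_eq_of_mem_range N hmem ⟨1, map_one N⟩
  have e : {b : K // b ^ (q + 1) = -1} ≃ {u : Kˣ // N u = -1} :=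
    { toFun := fun b =>
        ⟨Units.mk0 b.1 (by rintro h; simpa [h] using b.2), Units.ext (by simp [N, b.2])⟩
      invFun := fun u => ⟨u.1.1, by simpa [N] using congrArg Units.val u.2⟩
      left_inv := fun _ => rfl
      right_inv := fun _ => Subtype.ext (Units.ext rfl) }
  rw [Nat.card_congr e, ← hker, Nat.card_eq_fintype_card, Nat.card_eq_fintype_card,
    Fintype.card_subtype, Fintype.card_subtype, hfiber]
  simp only [MonoidHom.mem_ker]

theorem card_vertices_two (hK : Fintype.card K = q ^ 2) (τ : K →+* K)
    (hτq : ∀ x, τ x = x ^ q) :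
    Nat.card {S : Submodule K (Fin 2 → K) // IsVertex τ S} = q * (q - 1) := by
  classical
  have hq := two_le_of_card_eq_sq hK
  have hneg : (-1 : K) ^ q = -1 := by rw [← hτq, map_neg, map_one]
  have hone := isVertex_span_singleton_one_iff τ hτq
  let f : Option {b : K // b ^ (q + 1) ≠ -1} → {S : Submodule K (Fin 2 → K) // IsVertex τ S} :=
    fun o => o.elim ⟨_, isVertex_span_singleton_zero_one τ⟩ fun b => ⟨_, (hone b).2 b.2⟩
  have hf : Function.Bijective f := by
    refine ⟨?_, fun S => ?_⟩
    · rintro (_ | b) (_ | b') h <;> simp only [f, Option.elim, Subtype.mk.injEq] at h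
      · rfl
      · exact absurd h.symm (span_singleton_one_ne _)
      · exact absurd h (span_singleton_one_ne _)
      · rw [Subtype.ext (span_singleton_one_injective h)]
    · obtain ⟨v, hv, hSv⟩ := (isVertex_iff τ).1 S.2
      rcases span_singleton_eq_or_exists (ne_zero_of_Psi_ne_zero τ hv) with h | ⟨b, h⟩
      · exact ⟨none, Subtype.ext (hSv.trans h).symm⟩
      · exact ⟨some ⟨b, (hone b).1 (hSv.trans h ▸ S.2)⟩, Subtype.ext (hSv.trans h).symm⟩
  rw [← Nat.card_eq_of_bijective f hf, Finite.card_option, Nat.card_eq_fintype_card,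
    Fintype.card_subtype_compl, hK, ← Nat.card_eq_fintype_card,
    card_pow_succ_eq_neg_one hK hneg]
  zify [show q + 1 ≤ q ^ 2 by nlinarith, show 1 ≤ q by omega]
  ring

end FiniteField

theorem statement13_general [Fintype K] (q : ℕ)
    (hK : Fintype.card K = q ^ 2) (τ : K →+* K) (hτq : ∀ x, τ x = x ^ q) :
    Nat.card {S : Submodule K (Fin 2 → K) // IsVertex (⇑τ) S} = q * (q - 1) ∧
    (∀ S, ∃! W, (FrameGraph τ (tau_invol hK τ hτq) 2).Adj S W) ∧
    Nat.card ((FrameGraph τ (tau_invol hK τ hτq) 2).ConnectedComponent) = q * (q - 1) / 2 := by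
  have hcard := card_vertices_two hK τ hτq
  have hunique := existsUnique_frameGraph_adj τ (tau_invol hK τ hτq)
  refine ⟨hcard, hunique, ?_⟩
  rw [← hcard, SimpleGraph.card_eq_two_mul_card_connectedComponent_of_existsUnique_adj hunique]
  omega

/-- For `n = 2`, the graph `G(V)` has exactly `q(q-1)` vertices, every
vertex has exactly one neighbour, and there are exactly `q(q-1)/2` connected components. -/
theorem statement13 [Fintype K] (q : ℕ) (hq : IsPrimePow q)
    (hK : Fintype.card K = q ^ 2) (τ : K →+* K) (hτq : ∀ x, τ x = x ^ q) :
    Nat.card {S : Submodule K (Fin 2 → K) // IsVertex (⇑τ) S} = q * (q - 1) ∧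
    (∀ S, ∃! W, (FrameGraph τ (tau_invol hK τ hτq) 2).Adj S W) ∧
    Nat.card ((FrameGraph τ (tau_invol hK τ hτq) 2).ConnectedComponent) = q * (q - 1) / 2 :=
  statement13_general q hK τ hτq

end FramePaper
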